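/- Let n ≥ 5 and let n_1, n_2, ..., n_k be positive integers each at least 5 with n_1 + ... + n_k = n. Then the set {1,...,n} can be partitioned into sets V_1, ..., V_k with |V_i| = n_i such that each V_i carries a cycle all of whose edges have prime difference (i.e., the prime difference graph G_n admits a 2-factor with cycle lengths n_1, ..., n_k). -/

import Mathlib

/-!
Cut `{1, …, n}` into consecutive intervals of the prescribed lengths; it then suffices to find a
prime-difference Hamiltonian cycle on every interval of length `m ≥ 5`, and by translation on
`{0, …, m - 1}`. There we build a Hamiltonian path from `2` to `0`, closed by the edge `0 — 2`:
explicit ones for `5 ≤ m ≤ 8`, and from a path `P` for `m` the path `2, P⁻¹ + 4, 1, 3, 0` for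
`m + 4`. Since `P⁻¹ + 4` runs from `4` to `6`, the new edges have differences `2, 5, 2, 3`.
-/

/-- The finite set `V ⊆ ℤ` carries a cycle all of whose edges have prime difference. -/
def HasPrimeDiffCycle (V : Finset ℤ) : Prop :=
  ∃ c : ℕ → ℤ, Set.BijOn c (Set.Ico 0 V.card) ↑V ∧
    (∀ i, i + 1 < V.card → ((c i - c (i + 1)).natAbs).Prime) ∧
    ((c (V.card - 1) - c 0).natAbs).Prime

def PrimeDiff (x y : ℤ) : Prop := (x - y).natAbs.Prime

instance : DecidableRel PrimeDiff := fun _ _ => inferInstanceAs (Decidable (Nat.Prime _))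

theorem PrimeDiff.symm {x y : ℤ} (h : PrimeDiff x y) : PrimeDiff y x := by
  rwa [PrimeDiff, ← Int.natAbs_neg, neg_sub]

@[simp]
theorem primeDiff_add_right (x y c : ℤ) : PrimeDiff (x + c) (y + c) ↔ PrimeDiff x y := by
  simp only [PrimeDiff, add_sub_add_right_eq_sub]

theorem hasPrimeDiffCycle_of_isChain {l : List ℤ} {x y : ℤ} (hnodup : l.Nodup)
    (hchain : l.IsChain PrimeDiff) (hhead : l.head? = some x) (hlast : l.getLast? = some y)
    (hclose : PrimeDiff y x) : HasPrimeDiffCycle l.toFinset := by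
  have hpos : 0 < l.length := List.length_pos_iff.2 (by rintro rfl; simp at hhead)
  have hget (i : ℕ) (hi : i < l.length) : l.getD i 0 = l[i] := List.getD_eq_getElem _ _ hi
  refine ⟨(l.getD · 0), ⟨?_, ?_, ?_⟩, ?_, ?_⟩ <;>
    simp only [List.toFinset_card_of_nodup hnodup, Set.MapsTo, Set.InjOn, Set.SurjOn,
      Set.mem_Ico, zero_le, true_and, List.coe_toFinset, Set.subset_def, Set.mem_image,
      Set.mem_ofPred_eq]
  · intro i hi
    rw [hget i hi]
    exact List.getElem_mem hi
  · intro i hi j hj hij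
    rwa [hget i hi, hget j hj, hnodup.getElem_inj_iff] at hij
  · intro z hz
    obtain ⟨i, hi, rfl⟩ := List.mem_iff_getElem.1 hz
    exact ⟨i, hi, hget i hi⟩
  · intro i hi
    rw [hget i (by omega), hget (i + 1) hi]
    exact List.isChain_iff_getElem.1 hchain i hi
  · rw [List.head?_eq_getElem?, List.getElem?_eq_getElem hpos, Option.some_inj] at hhead
    rw [List.getLast?_eq_getElem?, List.getElem?_eq_getElem (by omega), Option.some_inj] at hlast
    rwa [hget 0 hpos, hget _ (by omega), hhead, hlast]

structure IsPrimeDiffPath (m : ℕ) (l : List ℤ) : Prop where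
  nodup : l.Nodup
  toFinset_eq : l.toFinset = Finset.Ico 0 (m : ℤ)
  isChain : l.IsChain PrimeDiff
  head?_eq : l.head? = some 2
  getLast?_eq : l.getLast? = some 0

theorem IsPrimeDiffPath.mem_iff {m : ℕ} {l : List ℤ} (h : IsPrimeDiffPath m l) (x : ℤ) :
    x ∈ l ↔ 0 ≤ x ∧ x < m := by
  rw [← List.mem_toFinset, h.toFinset_eq, Finset.mem_Ico]

theorem IsPrimeDiffPath.hasPrimeDiffCycle_Ico {m : ℕ} {l : List ℤ} (h : IsPrimeDiffPath m l)
    (b : ℤ) : HasPrimeDiffCycle (Finset.Ico b (b + m)) := by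
  have hset : (l.map (· + b)).toFinset = Finset.Ico b (b + m) := by
    ext x
    simp only [List.mem_toFinset, List.mem_map, h.mem_iff, Finset.mem_Ico]
    exact ⟨by omega, fun _ => ⟨x - b, by omega, by omega⟩⟩
  rw [← hset]
  refine hasPrimeDiffCycle_of_isChain (x := 2 + b) (y := 0 + b)
    ((List.nodup_map_iff (add_left_injective b)).2 h.nodup) ?_
    (by simp [h.head?_eq]) (by simp [h.getLast?_eq]) ((primeDiff_add_right _ _ _).2 (by decide))
  simpa [List.isChain_map] using h.isChain

theorem IsPrimeDiffPath.extend {m : ℕ} {l : List ℤ} (h : IsPrimeDiffPath m l) :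
    IsPrimeDiffPath (m + 4) (2 :: ((l.map (· + 4)).reverse ++ [1, 3, 0])) := by
  have hmem (y : ℤ) : y ∈ l.map (· + 4) ↔ 4 ≤ y ∧ y < m + 4 := by
    simp only [List.mem_map, h.mem_iff]
    exact ⟨by omega, fun _ => ⟨y - 4, by omega, by omega⟩⟩
  constructor
  · refine List.nodup_cons.2 ⟨?_, List.nodup_append.2
      ⟨List.nodup_reverse.2 (h.nodup.map (add_left_injective 4)), by decide, ?_⟩⟩
    · simp [hmem]
    · intro x hx y hy
      rw [List.mem_reverse, hmem] at hx
      simp only [List.mem_cons, List.not_mem_nil, or_false] at hy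
      omega
  · ext x
    simp only [List.mem_toFinset, List.mem_cons, List.mem_append, List.mem_reverse, hmem,
      List.not_mem_nil, or_false, Finset.mem_Ico, Nat.cast_add, Nat.cast_ofNat]
    omega
  · have hrev : ((l.map (· + 4)).reverse).IsChain PrimeDiff := by
      rw [List.isChain_reverse, List.isChain_map]
      exact h.isChain.imp fun x y hxy => by simpa using hxy.symm
    have hhead : ((l.map (· + 4)).reverse).head? = some 4 := by simp [h.getLast?_eq]
    have hlast : ((l.map (· + 4)).reverse).getLast? = some 6 := by simp [h.head?_eq]
    rw [List.isChain_cons, List.isChain_append, List.head?_append, hhead, hlast]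
    refine ⟨?_, hrev, by decide, ?_⟩
    · simpa using (by decide : PrimeDiff 2 4)
    · simpa using (by decide : PrimeDiff 6 1)
  · rfl
  · rw [← List.cons_append, List.getLast?_append]
    rfl

theorem exists_isPrimeDiffPath {m : ℕ} (hm : 5 ≤ m) : ∃ l, IsPrimeDiffPath m l := by
  induction m using Nat.strong_induction_on with
  | _ m ih =>
    by_cases hsmall : m ≤ 8
    · interval_cases m
      exacts [⟨[2, 4, 1, 3, 0], by decide, by decide, by decide, rfl, rfl⟩,
        ⟨[2, 4, 1, 3, 5, 0], by decide, by decide, by decide, rfl, rfl⟩,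
        ⟨[2, 4, 6, 1, 3, 5, 0], by decide, by decide, by decide, rfl, rfl⟩,
        ⟨[2, 4, 6, 1, 3, 5, 7, 0], by decide, by decide, by decide, rfl, rfl⟩]
    · obtain ⟨l, hl⟩ := ih (m - 4) (by omega) (by omega)
      rw [show m = m - 4 + 4 by omega]
      exact ⟨_, hl.extend⟩

open Function in
theorem exists_partition_Ico (k : ℕ) (ns : Fin k → ℕ) (a : ℤ) :
    ∃ V : Fin k → Finset ℤ, Pairwise (Disjoint on V) ∧
      Finset.univ.biUnion V = Finset.Ico a (a + ∑ i, ns i) ∧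
      ∀ i, ∃ b : ℤ, V i = Finset.Ico b (b + ns i) := by
  induction k generalizing a with
  | zero => exact ⟨Fin.elim0, fun i => i.elim0, by simp, fun i => i.elim0⟩
  | succ k ih =>
    obtain ⟨V, hdisj, hunion, hV⟩ := ih (fun i => ns i.succ) (a + ns 0)
    have hsub (i : Fin k) : V i ⊆ Finset.Ico (a + ns 0) (a + ns 0 + ∑ j : Fin k, ns j.succ) :=
      hunion ▸ Finset.subset_biUnion_of_mem V (Finset.mem_univ i)
    refine ⟨Fin.cons (Finset.Ico a (a + ns 0)) V, ?_, ?_, ?_⟩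
    · intro i j hij
      cases i using Fin.cases <;> cases j using Fin.cases
      · exact absurd rfl hij
      · exact (Finset.Ico_disjoint_Ico_consecutive _ _ _).mono_right (hsub _)
      · exact ((Finset.Ico_disjoint_Ico_consecutive _ _ _).mono_right (hsub _)).symm
      · exact hdisj (Fin.succ_injective _ |>.ne_iff.1 hij)
    · have hmem (x : ℤ) : (∃ i, x ∈ V i) ↔ x ∈ Finset.univ.biUnion V := by simp
      rw [hunion] at hmem
      ext x
      simp only [Finset.mem_biUnion, Finset.mem_univ, true_and, Fin.exists_fin_succ, Fin.cons_zero,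
        Fin.cons_succ, hmem, Finset.mem_Ico, Fin.sum_univ_succ, Nat.cast_add]
      omega
    · intro i
      cases i using Fin.cases
      · exact ⟨a, rfl⟩
      · exact hV _

theorem prime_diff_two_factor_lengths_ge_five_general (n k : ℕ)
    (ns : Fin k → ℕ) (hns : ∀ i, 5 ≤ ns i) (hsum : ∑ i, ns i = n) :
    ∃ V : Fin k → Finset ℤ,
      (∀ i j, i ≠ j → Disjoint (V i) (V j)) ∧
      (Finset.univ.biUnion V = Finset.Icc (1 : ℤ) n) ∧
      (∀ i, (V i).card = ns i) ∧
      (∀ i, HasPrimeDiffCycle (V i)) := by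
  obtain ⟨V, hdisj, hunion, hblock⟩ := exists_partition_Ico k ns 1
  refine ⟨V, hdisj, ?_, fun i => ?_, fun i => ?_⟩
  · rw [hunion, ← hsum]
    ext x
    simp only [Finset.mem_Ico, Finset.mem_Icc]
    push_cast
    omega
  · obtain ⟨b, hb⟩ := hblock i
    simp [hb, Int.card_Ico]
  · obtain ⟨b, hb⟩ := hblock i
    obtain ⟨l, hl⟩ := exists_isPrimeDiffPath (hns i)
    exact hb ▸ hl.hasPrimeDiffCycle_Ico b

/-- `G_n` admits a 2-factor with prescribed cycle lengths, each at least 5. -/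
theorem prime_diff_two_factor_lengths_ge_five (n k : ℕ) (hn : 5 ≤ n)
    (ns : Fin k → ℕ) (hns : ∀ i, 5 ≤ ns i) (hsum : ∑ i, ns i = n) :
    ∃ V : Fin k → Finset ℤ,
      (∀ i j, i ≠ j → Disjoint (V i) (V j)) ∧
      (Finset.univ.biUnion V = Finset.Icc (1 : ℤ) n) ∧
      (∀ i, (V i).card = ns i) ∧
      (∀ i, HasPrimeDiffCycle (V i)) :=
  prime_diff_two_factor_lengths_ge_five_general n k ns hns hsum
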